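/- arXiv:1702.05601 — 2 statements merged into one kernel-verified Lean document; each statement's English description precedes it below -/
import Mathlib

section
/- Let $W(e_1,e_2,e_3)$ be a wedge generated by linearly independent unit vectors in $\mathbb{R}^3$. The wedge is simple, i.e., the orthogonal projection of $e_1$ onto the span of $\{e_2,e_3\}$ is a positive multiple of $e_2$ and the orthogonal projection of $e_2$ onto the span of $\{e_3\}$ is a positive multiple of $e_3$, if and only if $\langle e_1,e_2\rangle>0$, $\langle e_2,e_3\rangle>0$, and $\langle e_1,e_3\rangle = \langle e_1,e_2\rangle\langle e_2,e_3\rangle$. -/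
open scoped RealInnerProductSpace

/-!
The projection of `v` onto a closed subspace `K` is the unique `x ∈ K` with `v - x ⊥ K`.
For `x = c • e₂` with `e₂` a unit vector and `K = span {e₂, e₃}`, orthogonality to `e₂` and `e₃`
reads `c = ⟪e₁, e₂⟫` and `⟪e₁, e₃⟫ = c ⟪e₂, e₃⟫`, while the projection of `e₂` onto the line through
the unit vector `e₃` is `⟪e₂, e₃⟫ • e₃`.
-/

open Submodule

variable {E : Type*} [NormedAddCommGroup E] [InnerProductSpace ℝ E]

theorem exists_pos_smul_eq_iff {u : E} (hu : u ≠ 0) (a : ℝ) :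
    (∃ c : ℝ, 0 < c ∧ a • u = c • u) ↔ 0 < a :=
  ⟨fun ⟨_, hc, h⟩ => smul_left_injective ℝ hu h ▸ hc, fun ha => ⟨a, ha, rfl⟩⟩

namespace Submodule

theorem starProjection_eq_iff_sub_mem_orthogonal {K : Submodule ℝ E} [K.HasOrthogonalProjection]
    {v x : E} (hx : x ∈ K) : K.starProjection v = x ↔ v - x ∈ Kᗮ :=
  ⟨fun h => h ▸ sub_starProjection_mem_orthogonal v, eq_starProjection_of_mem_orthogonal hx⟩

theorem mem_orthogonal_span_pair_iff {u w x : E} :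
    x ∈ (span ℝ {u, w})ᗮ ↔ ⟪u, x⟫ = 0 ∧ ⟪w, x⟫ = 0 := by
  rw [span_insert, ← inf_orthogonal, mem_inf, mem_orthogonal_singleton_iff_inner_right,
    mem_orthogonal_singleton_iff_inner_right]

theorem starProjection_span_pair_eq_smul_iff {u w v : E} [(span ℝ {u, w}).HasOrthogonalProjection]
    (hu : ‖u‖ = 1) (c : ℝ) :
    (span ℝ {u, w}).starProjection v = c • u ↔ ⟪u, v⟫ = c ∧ ⟪w, v⟫ = c * ⟪w, u⟫ := by
  have huu : ⟪u, u⟫ = 1 := by rw [real_inner_self_eq_norm_sq, hu, one_pow]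
  rw [starProjection_eq_iff_sub_mem_orthogonal (smul_mem _ c (subset_span (Set.mem_insert u _))),
    mem_orthogonal_span_pair_iff, inner_sub_right, inner_sub_right, inner_smul_right,
    inner_smul_right, huu, mul_one, sub_eq_zero, sub_eq_zero]

theorem exists_pos_starProjection_span_singleton_eq_smul_iff {u v : E} (hu : ‖u‖ = 1) :
    (∃ c : ℝ, 0 < c ∧ (ℝ ∙ u).starProjection v = c • u) ↔ 0 < ⟪u, v⟫ := by
  rw [starProjection_unit_singleton ℝ hu]
  exact exists_pos_smul_eq_iff (norm_ne_zero_iff.mp (hu ▸ one_ne_zero)) _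

theorem exists_pos_starProjection_span_pair_eq_smul_iff {u w v : E}
    [(span ℝ {u, w}).HasOrthogonalProjection] (hu : ‖u‖ = 1) :
    (∃ c : ℝ, 0 < c ∧ (span ℝ {u, w}).starProjection v = c • u) ↔
      0 < ⟪u, v⟫ ∧ ⟪w, v⟫ = ⟪u, v⟫ * ⟪w, u⟫ := by
  simp_rw [starProjection_span_pair_eq_smul_iff hu]
  constructor
  · rintro ⟨c, hc, rfl, h⟩
    exact ⟨hc, h⟩
  · rintro ⟨hpos, h⟩
    exact ⟨_, hpos, rfl, h⟩

end Submodule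

theorem simple_wedge_characterization_general
    (e1 e2 e3 : EuclideanSpace ℝ (Fin 3))
    (h2 : ‖e2‖ = 1) (h3 : ‖e3‖ = 1) :
    (((Submodule.orthogonalProjectionOnto (Submodule.span ℝ {e2, e3}) e1 : EuclideanSpace ℝ (Fin 3)) ∈
        {v | ∃ c : ℝ, 0 < c ∧ v = c • e2}) ∧
      ((Submodule.orthogonalProjectionOnto (Submodule.span ℝ {e3}) e2 : EuclideanSpace ℝ (Fin 3)) ∈
        {v | ∃ c : ℝ, 0 < c ∧ v = c • e3})) ↔
    (0 < ⟪e1, e2⟫ ∧ 0 < ⟪e2, e3⟫ ∧ ⟪e1, e3⟫ = ⟪e1, e2⟫ * ⟪e2, e3⟫) := by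
  simp only [Set.mem_ofPred_eq, coe_orthogonalProjectionOnto_apply,
    exists_pos_starProjection_span_pair_eq_smul_iff h2,
    exists_pos_starProjection_span_singleton_eq_smul_iff h3,
    real_inner_comm e1, real_inner_comm e2 e3]
  tauto

/-- A three-dimensional wedge generated by linearly independent unit vectors is *simple*
(the orthogonal projection of `e1` onto `span {e2, e3}` is a positive multiple of `e2`,
and the orthogonal projection of `e2` onto `span {e3}` is a positive multiple of `e3`)
if and only if `⟪e1,e2⟫ > 0`, `⟪e2,e3⟫ > 0` and `⟪e1,e3⟫ = ⟪e1,e2⟫ * ⟪e2,e3⟫`. -/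
theorem simple_wedge_characterization
    (e1 e2 e3 : EuclideanSpace ℝ (Fin 3))
    (hindep : LinearIndependent ℝ ![e1, e2, e3])
    (h1 : ‖e1‖ = 1) (h2 : ‖e2‖ = 1) (h3 : ‖e3‖ = 1) :
    (((Submodule.orthogonalProjectionOnto (Submodule.span ℝ {e2, e3}) e1 : EuclideanSpace ℝ (Fin 3)) ∈
        {v | ∃ c : ℝ, 0 < c ∧ v = c • e2}) ∧
      ((Submodule.orthogonalProjectionOnto (Submodule.span ℝ {e3}) e2 : EuclideanSpace ℝ (Fin 3)) ∈
        {v | ∃ c : ℝ, 0 < c ∧ v = c • e3})) ↔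
    (0 < ⟪e1, e2⟫ ∧ 0 < ⟪e2, e3⟫ ∧ ⟪e1, e3⟫ = ⟪e1, e2⟫ * ⟪e2, e3⟫) :=
  simple_wedge_characterization_general e1 e2 e3 h2 h3
end

section
/- Let $m_1 > m_2 \ge m_3 > 0$. The unit normal vectors $n_{12}$ and $n_{13}$ to the planes spanned by $\{h_1,h_2\}$ and $\{h_1,h_3\}$ respectively satisfy $\langle n_{12}, n_{13}\rangle = 1/2$ (i.e., the dihedral angle between the two planes along $h_1$ is $\pi/3$) if and only if $2\sqrt{m_1 m_3} = \sqrt{(m_1+m_2)(m_2+m_3)}$. -/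
set_option maxHeartbeats 1000000


/-- Euclidean dot product on `Fin 3 → ℝ`. -/
def dot3 (u v : Fin 3 → ℝ) : ℝ := ∑ i, u i * v i

/-- The dihedral angle along `h1` between the planes `span {h1, h2}` and `span {h1, h3}`
equals `π/3` (i.e. the unit normals `n12`, `n13` satisfy `⟪n12, n13⟫ = 1/2`) if and only if
`2 √(m1 m3) = √((m1+m2)(m2+m3))`. -/
theorem wide_wedge_mass_condition
    (m1 m2 m3 M1 M2 : ℝ)
    (hm12 : m2 < m1) (hm23 : m3 ≤ m2) (hm3 : 0 < m3)
    (hM1 : M1 = m1 + m2 + m3) (hM2 : M2 = m2 + m3)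
    (h1 h2 h3 : Fin 3 → ℝ)
    (hh1 : h1 = ![Real.sqrt m1 / Real.sqrt M1, Real.sqrt m2 / Real.sqrt M1,
      Real.sqrt m3 / Real.sqrt M1])
    (hh2 : h2 = ![0, Real.sqrt m2 / Real.sqrt M2, Real.sqrt m3 / Real.sqrt M2])
    (hh3 : h3 = ![0, 0, 1])
    (n12 n13 : Fin 3 → ℝ)
    (hn12 : n12 = (Real.sqrt (dot3 (crossProduct h1 h2) (crossProduct h1 h2)))⁻¹ •
      crossProduct h1 h2)
    (hn13 : n13 = (Real.sqrt (dot3 (crossProduct h1 h3) (crossProduct h1 h3)))⁻¹ •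
      crossProduct h1 h3) :
    dot3 n12 n13 = 1 / 2 ↔
      2 * Real.sqrt (m1 * m3) = Real.sqrt ((m1 + m2) * (m2 + m3)) := by
  have hm2 : 0 < m2 := lt_of_lt_of_le hm3 hm23
  have hm1 : 0 < m1 := lt_trans hm2 hm12
  have hM2pos : 0 < M2 := by rw [hM2]; linarith
  have hM1pos : 0 < M1 := by rw [hM1]; linarith
  have h12pos : 0 < m1 + m2 := by linarith
  set a := Real.sqrt m1 with hadef
  set b := Real.sqrt m2 with hbdef
  set c := Real.sqrt m3 with hcdef
  set p := Real.sqrt M1 with hpdef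
  set q := Real.sqrt M2 with hqdef
  set r := Real.sqrt (m1 + m2) with hrdef
  have ha : 0 < a := Real.sqrt_pos.mpr hm1
  have hb : 0 < b := Real.sqrt_pos.mpr hm2
  have hc : 0 < c := Real.sqrt_pos.mpr hm3
  have hp : 0 < p := Real.sqrt_pos.mpr hM1pos
  have hq : 0 < q := Real.sqrt_pos.mpr hM2pos
  have hr : 0 < r := Real.sqrt_pos.mpr h12pos
  have ha2 : a ^ 2 = m1 := Real.sq_sqrt hm1.le
  have hb2 : b ^ 2 = m2 := Real.sq_sqrt hm2.le
  have hc2 : c ^ 2 = m3 := Real.sq_sqrt hm3.le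
  have hp2 : p ^ 2 = M1 := Real.sq_sqrt hM1pos.le
  have hq2 : q ^ 2 = M2 := Real.sq_sqrt hM2pos.le
  have hr2 : r ^ 2 = m1 + m2 := Real.sq_sqrt h12pos.le
  have hc12 : crossProduct h1 h2 = ![0, -(a * c / (p * q)), a * b / (p * q)] := by
    rw [hh1, hh2, cross_apply]
    ext i
    fin_cases i <;> simp <;> ring
  have hc13 : crossProduct h1 h3 = ![b / p, -(a / p), 0] := by
    rw [hh1, hh3, cross_apply]
    ext i
    fin_cases i <;> simp
  have hd12 : dot3 (crossProduct h1 h2) (crossProduct h1 h2) = (a / p) ^ 2 := by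
    rw [hc12]
    simp only [dot3, Fin.sum_univ_three, Matrix.cons_val_zero, Matrix.cons_val_one,
      Matrix.head_cons, Matrix.cons_val_two, Matrix.tail_cons]
    have hq2' : b ^ 2 + c ^ 2 = q ^ 2 := by rw [hb2, hc2, hq2, hM2]
    have e : (0:ℝ) * 0 + -(a * c / (p * q)) * -(a * c / (p * q)) +
        a * b / (p * q) * (a * b / (p * q)) = a ^ 2 * (b ^ 2 + c ^ 2) / (p ^ 2 * q ^ 2) := by
      ring
    rw [e, hq2']
    field_simp
  have hd13 : dot3 (crossProduct h1 h3) (crossProduct h1 h3) = (r / p) ^ 2 := by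
    rw [hc13]
    simp only [dot3, Fin.sum_univ_three, Matrix.cons_val_zero, Matrix.cons_val_one,
      Matrix.head_cons, Matrix.cons_val_two, Matrix.tail_cons]
    have hr2' : a ^ 2 + b ^ 2 = r ^ 2 := by rw [ha2, hb2, hr2]
    have e : b / p * (b / p) + -(a / p) * -(a / p) + (0:ℝ) * 0
        = (a ^ 2 + b ^ 2) / p ^ 2 := by ring
    rw [e, hr2', div_pow]
  have hs12 : Real.sqrt (dot3 (crossProduct h1 h2) (crossProduct h1 h2)) = a / p := by
    rw [hd12, Real.sqrt_sq (by positivity)]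
  have hs13 : Real.sqrt (dot3 (crossProduct h1 h3) (crossProduct h1 h3)) = r / p := by
    rw [hd13, Real.sqrt_sq (by positivity)]
  have key : dot3 n12 n13 = a * c / (r * q) := by
    rw [hn12, hn13, hs12, hs13, hc12, hc13]
    simp only [dot3, Fin.sum_univ_three, Pi.smul_apply, smul_eq_mul, Matrix.cons_val_zero,
      Matrix.cons_val_one, Matrix.head_cons, Matrix.cons_val_two, Matrix.tail_cons]
    field_simp
    ring
  rw [key]
  have hac : Real.sqrt (m1 * m3) = a * c := Real.sqrt_mul hm1.le m3
  have hrq : Real.sqrt ((m1 + m2) * (m2 + m3)) = r * q := by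
    rw [Real.sqrt_mul h12pos.le, ← hM2]
  rw [hac, hrq, div_eq_iff (by positivity)]
  constructor <;> intro h <;> linarith
end
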